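/- arXiv:1203.0481 — 2 statements merged into one kernel-verified Lean document; each statement's English description precedes it below -/
import Mathlib

section
/- Let A be an attractor of the IFS F with basin B(A), let x_0 ∈ B(A) and let σ ∈ Σ^∞ be disjunctive. Then for every map f in the semigroup S_F generated by F under composition, i.e. every f = f_{σ_1} ∘ … ∘ f_{σ_k} with k ≥ 1 and σ_1 … σ_k ∈ Σ^k, one has f(C_∞(x_0,σ)) ∩ C_∞(x_0,σ) ≠ ∅. -/
open Metric Filter Set MeasureTheory

variable {X : Type*} [MetricSpace X] [CompleteSpace X]
variable {Λ : Type*} [Fintype Λ] [Nonempty Λ]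

/-- The Hutchinson operator of the IFS given by the maps `f a`, `a : Λ`. -/
def Hutch (f : Λ → X → X) (B : Set X) : Set X := ⋃ a : Λ, f a '' B

/-- `A` attracts, under iteration of the Hutchinson operator, every nonempty
compact subset of `U`, in the Hausdorff metric. -/
def Attracts (f : Λ → X → X) (A U : Set X) : Prop :=
  ∀ B : Set X, B.Nonempty → IsCompact B → B ⊆ U →
    Tendsto (fun k : ℕ => hausdorffDist ((Hutch f)^[k] B) A) atTop (nhds 0)

/-- `A` is an attractor of the IFS `f`: a nonempty compact set admitting an open
neighbourhood `U ⊇ A` all of whose nonempty compact subsets are attracted to `A`. -/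
def IsAttractor (f : Λ → X → X) (A : Set X) : Prop :=
  A.Nonempty ∧ IsCompact A ∧ ∃ U : Set X, IsOpen U ∧ A ⊆ U ∧ Attracts f A U

/-- The basin of the attractor `A`: the union of all open `U ⊇ A` from which `A` attracts. -/
def basin (f : Λ → X → X) (A : Set X) : Set X :=
  ⋃₀ {U : Set X | IsOpen U ∧ A ⊆ U ∧ Attracts f A U}

/-- The chaos game orbit of `x₀` driven by the sequence `σ` (0-indexed: `σ 0` acts first). -/
def orbit (f : Λ → X → X) (σ : ℕ → Λ) (x₀ : X) : ℕ → X
  | 0 => x₀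
  | k + 1 => f (σ k) (orbit f σ x₀ k)

/-- `C_K(x₀,σ)`: the closure of the tail `{x_k : k ≥ K}` of the chaos game orbit. -/
def tailSet (f : Λ → X → X) (σ : ℕ → Λ) (x₀ : X) (K : ℕ) : Set X :=
  closure {y : X | ∃ k : ℕ, K ≤ k ∧ orbit f σ x₀ k = y}

/-- `C_∞(x₀,σ) = ⋂_K C_K(x₀,σ)`. -/
def Cinf (f : Λ → X → X) (σ : ℕ → Λ) (x₀ : X) : Set X :=
  ⋂ K : ℕ, tailSet f σ x₀ K

/-- For a word `w = (σ₁, …, σ_m)`, `wordApply f w = f_{σ_m} ∘ ⋯ ∘ f_{σ_1}`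
(the letter `w 0` acts first). -/
def wordApply (f : Λ → X → X) {m : ℕ} (w : Fin m → Λ) (x : X) : X :=
  (List.ofFn w).foldl (fun y a => f a y) x

/-- A sequence of symbols is disjunctive if it contains every finite word
as a block of consecutive letters. -/
def Disjunctive {Γ : Type*} (σ : ℕ → Γ) : Prop :=
  ∀ (m : ℕ) (w : Fin m → Γ), ∃ j : ℕ, ∀ l : Fin m, σ (j + l.1) = w l

/-- `fibreComp f ρ K = f_{ρ_1} ∘ f_{ρ_2} ∘ ⋯ ∘ f_{ρ_K}` (0-indexed: `f (ρ 0) ∘ ⋯ ∘ f (ρ (K-1))`). -/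
def fibreComp (f : Λ → X → X) (ρ : ℕ → Λ) : ℕ → X → X
  | 0 => id
  | K + 1 => fibreComp f ρ K ∘ f (ρ K)

/-- The fibre `A_ρ = ⋂_{K ≥ 1} f_{ρ_1} ∘ ⋯ ∘ f_{ρ_K}(A)` of the attractor `A`. -/
def fibre (f : Λ → X → X) (A : Set X) (ρ : ℕ → Λ) : Set X :=
  ⋂ K : ℕ, fibreComp f ρ (K + 1) '' A

/-- `A` is strongly fibred: every open set meeting `A` contains a fibre. -/
def StronglyFibred (f : Λ → X → X) (A : Set X) : Prop :=
  ∀ U : Set X, IsOpen U → (U ∩ A).Nonempty → ∃ ρ : ℕ → Λ, fibre f A ρ ⊆ U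

/-! The orbit of `x₀` is attracted by the compact set `A`, so along the infinitely many times `j`
at which `σ` reads the word `w`, the orbit points `x_j` have a cluster point `b ∈ A`; it lies in
`C_∞`. At those times `x_{j+k} = w(x_j)`, so by continuity `w(b)` is a cluster point of the orbit
as well, i.e. `w(b) ∈ C_∞`. -/

open Topology

theorem IsCompact.exists_mapClusterPt_of_tendsto_nhdsSet {α ι : Type*} [TopologicalSpace α]
    {A : Set α} {l : Filter ι} [l.NeBot] {u : ι → α} (hA : IsCompact A)
    (hu : Tendsto u l (𝓝ˢ A)) : ∃ a ∈ A, MapClusterPt a l u := by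
  by_contra! H
  have hdisj : Disjoint (𝓝ˢ A) (map u l) :=
    hA.disjoint_nhdsSet_left.2 fun a ha => by
      simpa [MapClusterPt, clusterPt_iff_not_disjoint] using H a ha
  exact (map_neBot (m := u)).ne (hdisj.eq_bot_of_ge hu)

theorem tendsto_nhdsSet_of_tendsto_hausdorffDist {α ι : Type*} [PseudoMetricSpace α]
    {A : Set α} {S : ι → Set α} {u : ι → α} {l : Filter ι} (hA : IsCompact A)
    (hAne : A.Nonempty) (hS : ∀ i, Bornology.IsBounded (S i)) (hu : ∀ i, u i ∈ S i)
    (h : Tendsto (fun i => hausdorffDist (S i) A) l (𝓝 0)) : Tendsto u l (𝓝ˢ A) := by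
  refine (Metric.tendsto_nhdsSet hA hAne).2 fun ε hε =>
    (h.eventually (gt_mem_nhds hε)).mono fun i hi => ?_
  have hfin := hausdorffEDist_ne_top_of_nonempty_of_bounded ⟨_, hu i⟩ hAne (hS i) hA.isBounded
  exact (infDist_le_hausdorffDist_of_mem (hu i) hfin).trans_lt hi

theorem Disjunctive.frequently_atTop {Γ : Type*} {σ : ℕ → Γ} (hσ : Disjunctive σ) {m : ℕ}
    (w : Fin m → Γ) : ∃ᶠ j in atTop, ∀ l : Fin m, σ (j + l) = w l := by
  refine Filter.frequently_atTop.2 fun N => ?_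
  obtain ⟨j, hj⟩ := hσ (N + m) (Fin.append (fun i : Fin N => σ i) w)
  refine ⟨j + N, Nat.le_add_left N j, fun l => ?_⟩
  simpa [Fin.append_right, add_assoc] using hj (Fin.natAdd N l)

section Orbit

variable {α ι : Type*} (f : ι → α → α)

theorem wordApply_succ {m : ℕ} (w : Fin (m + 1) → ι) (x : α) :
    wordApply f w x = f (w (Fin.last m)) (wordApply f (fun i : Fin m => w i.castSucc) x) := by
  rw [wordApply, wordApply, List.ofFn_succ', List.concat_eq_append, List.foldl_concat]

theorem continuous_wordApply [TopologicalSpace α] (hf : ∀ a, Continuous (f a)) {m : ℕ}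
    (w : Fin m → ι) : Continuous (wordApply f w) := by
  induction m with
  | zero => exact continuous_id
  | succ m ih =>
    simp_rw [funext (wordApply_succ f w)]
    exact (hf _).comp (ih _)

theorem orbit_add (σ : ℕ → ι) (x₀ : α) (j m : ℕ) :
    orbit f σ x₀ (j + m) = wordApply f (fun l : Fin m => σ (j + l)) (orbit f σ x₀ j) := by
  induction m with
  | zero => rfl
  | succ m ih =>
    rw [wordApply_succ]
    exact congrArg (f _) ih

theorem orbit_mem_iterate_hutch (σ : ℕ → ι) (x₀ : α) (n : ℕ) :
    orbit f σ x₀ n ∈ (Hutch f)^[n] {x₀} := by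
  induction n with
  | zero => rfl
  | succ n ih =>
    rw [Function.iterate_succ_apply']
    exact mem_iUnion.2 ⟨σ n, mem_image_of_mem _ ih⟩

theorem Set.Finite.iterate_hutch [Finite ι] {B : Set α} (hB : B.Finite) (n : ℕ) :
    ((Hutch f)^[n] B).Finite :=
  Function.Iterate.rec (fun B : Set α => B.Finite) hB
    (fun _ hB => finite_iUnion fun a => hB.image (f a)) n

theorem mem_Cinf_iff_mapClusterPt [MetricSpace α] {σ : ℕ → ι} {x₀ y : α} :
    y ∈ Cinf f σ x₀ ↔ MapClusterPt y atTop (orbit f σ x₀) := by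
  simp only [Cinf, tailSet, mem_iInter, mapClusterPt_atTop_iff_forall_mem_closure]
  rfl

end Orbit

theorem IsAttractor.tendsto_orbit_nhdsSet {α ι : Type*} [MetricSpace α] [Finite ι]
    {f : ι → α → α} {A : Set α} (hA : IsAttractor f A) {x₀ : α} (hx₀ : x₀ ∈ basin f A)
    (σ : ℕ → ι) :
    Tendsto (orbit f σ x₀) atTop (𝓝ˢ A) := by
  obtain ⟨hAne, hAc, -⟩ := hA
  obtain ⟨U, ⟨-, -, hAttr⟩, hx₀U⟩ := hx₀
  exact tendsto_nhdsSet_of_tendsto_hausdorffDist hAc hAne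
    (fun n => ((finite_singleton x₀).iterate_hutch f n).isBounded)
    (orbit_mem_iterate_hutch f σ x₀)
    (hAttr {x₀} (singleton_nonempty x₀) isCompact_singleton (singleton_subset_iff.2 hx₀U))

theorem chaosGame_semigroup_image_inter_Cinf_general
    (f : Λ → X → X) (hf : ∀ a : Λ, Continuous (f a))
    (A : Set X) (hA : IsAttractor f A)
    (x₀ : X) (hx₀ : x₀ ∈ basin f A)
    (σ : ℕ → Λ) (hσ : Disjunctive σ)
    (k : ℕ) (w : Fin k → Λ) :
    (wordApply f w '' Cinf f σ x₀ ∩ Cinf f σ x₀).Nonempty := by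
  set l := atTop ⊓ 𝓟 {j | ∀ i : Fin k, σ (j + i) = w i}
  have : l.NeBot := frequently_iff_neBot.1 (hσ.frequently_atTop w)
  obtain ⟨b, -, hb⟩ := hA.2.1.exists_mapClusterPt_of_tendsto_nhdsSet (l := l)
    ((hA.tendsto_orbit_nhdsSet hx₀ σ).mono_left inf_le_left)
  have hword : wordApply f w ∘ orbit f σ x₀ =ᶠ[l] orbit f σ x₀ ∘ (· + k) :=
    eventually_inf_principal.2 <| .of_forall fun j (hj : ∀ i : Fin k, σ (j + i) = w i) => by
      simp only [Function.comp_apply, orbit_add, funext hj]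
  have hwb : MapClusterPt (wordApply f w b) l (orbit f σ x₀ ∘ (· + k)) :=
    ((continuous_wordApply f hf w).continuousAt.mapClusterPt hb).congrFun hword
  have hshift : Tendsto (· + k) l atTop := (tendsto_add_atTop_nat k).mono_left inf_le_left
  exact ⟨wordApply f w b, ⟨b, (mem_Cinf_iff_mapClusterPt f).2 (hb.mono inf_le_left), rfl⟩,
    (mem_Cinf_iff_mapClusterPt f).2 (hwb.of_comp hshift)⟩

/-- Lemma 3: if `σ` is disjunctive then every element
`f = f_{σ_1} ∘ ⋯ ∘ f_{σ_k}` (`k ≥ 1`) of the semigroup generated by the IFS satisfies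
`f(C_∞(x₀,σ)) ∩ C_∞(x₀,σ) ≠ ∅`. -/
theorem chaosGame_semigroup_image_inter_Cinf
    (f : Λ → X → X) (hf : ∀ a : Λ, Continuous (f a))
    (A : Set X) (hA : IsAttractor f A)
    (x₀ : X) (hx₀ : x₀ ∈ basin f A)
    (σ : ℕ → Λ) (hσ : Disjunctive σ)
    (k : ℕ) (hk : 0 < k) (w : Fin k → Λ) :
    (wordApply f w '' Cinf f σ x₀ ∩ Cinf f σ x₀).Nonempty :=
  chaosGame_semigroup_image_inter_Cinf_general f hf A hA x₀ hx₀ σ hσ k w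
end

section
/- Let A be an attractor of the IFS F with basin B(A), let x_0 ∈ B(A) and let σ ∈ Σ^∞ be disjunctive. Then the set C_∞(x_0,σ) intersects every fibre of A; that is, A_ρ ∩ C_∞(x_0,σ) ≠ ∅ for every ρ ∈ Σ^∞. -/
open Metric Filter Set MeasureTheory

variable {X : Type*} [MetricSpace X] [CompleteSpace X]
variable {Λ : Type*} [Fintype Λ] [Nonempty Λ]

/-!
The Hutchinson iterates of `{x₀}` converge to `A`, so the chaos game orbit approaches `A`.
A disjunctive sequence contains the reversed word `ρ_K ⋯ ρ_1` arbitrarily late; an orbit point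
close to `A` at the start of such an occurrence is carried by `f_{ρ_1} ∘ ⋯ ∘ f_{ρ_K}` close to
`f_{ρ_1} ∘ ⋯ ∘ f_{ρ_K}(A)`, so a limit point of these images lies in that set and in every tail
closure `C_N`. Since `A` is invariant, these sets decrease in `K`, and the intersection of the
resulting nested compact sets lies in `A_ρ ∩ C_∞`.
-/

section Hausdorff

variable {X : Type*} [PseudoMetricSpace X]

theorem tendsto_infDist_of_tendsto_hausdorffDist {ι : Type*} {l : Filter ι}
    {s t : ι → Set X} {x : ι → X} (hx : ∀ i, x i ∈ s i) (hs : ∀ i, Bornology.IsBounded (s i))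
    (ht : ∀ i, (t i).Nonempty) (htb : ∀ i, Bornology.IsBounded (t i))
    (h : Tendsto (fun i => hausdorffDist (s i) (t i)) l (nhds 0)) :
    Tendsto (fun i => infDist (x i) (t i)) l (nhds 0) :=
  squeeze_zero (fun _ => infDist_nonneg) (fun i => infDist_le_hausdorffDist_of_mem (hx i)
    (hausdorffEDist_ne_top_of_nonempty_of_bounded ⟨_, hx i⟩ (ht i) (hs i) (htb i))) h

theorem exists_seq_tendsto_of_tendsto_hausdorffDist {s : ℕ → Set X} {t : Set X}
    (hs : ∀ k, IsCompact (s k)) (hsne : ∀ k, (s k).Nonempty) (ht : Bornology.IsBounded t)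
    (h : Tendsto (fun k => hausdorffDist (s k) t) atTop (nhds 0)) {x : X} (hx : x ∈ t) :
    ∃ y : ℕ → X, (∀ k, y k ∈ s k) ∧ Tendsto y atTop (nhds x) := by
  choose y hy hxy using fun k => (hs k).exists_infDist_eq_dist (hsne k) x
  have hdist : Tendsto (fun k => infDist x (s k)) atTop (nhds 0) :=
    tendsto_infDist_of_tendsto_hausdorffDist (s := fun _ => t) (fun _ => hx) (fun _ => ht)
      hsne (fun k => (hs k).isBounded) (h.congr fun _ => hausdorffDist_comm)
  exact ⟨y, hy, tendsto_iff_dist_tendsto_zero.2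
    (hdist.congr fun k => (hxy k).trans (dist_comm _ _))⟩

theorem IsCompact.exists_tendsto_subseq_of_tendsto_infDist {A : Set X} (hA : IsCompact A)
    (hAne : A.Nonempty) {u : ℕ → X} (h : Tendsto (fun n => infDist (u n) A) atTop (nhds 0)) :
    ∃ b ∈ A, ∃ φ : ℕ → ℕ, StrictMono φ ∧ Tendsto (u ∘ φ) atTop (nhds b) := by
  choose a ha hua using fun n => hA.exists_infDist_eq_dist hAne (u n)
  obtain ⟨b, hb, φ, hφ, hab⟩ := hA.tendsto_subseq ha
  have hdist : Tendsto (fun n => dist (a n) (u n)) atTop (nhds 0) := by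
    simpa only [hua, dist_comm] using h
  exact ⟨b, hb, φ, hφ, hab.congr_dist (hdist.comp hφ.tendsto_atTop)⟩

end Hausdorff

theorem Disjunctive.exists_ge {Γ : Type*} {σ : ℕ → Γ} (hσ : Disjunctive σ) (N : ℕ) {n : ℕ}
    (w : Fin n → Γ) : ∃ j ≥ N, ∀ l : Fin n, σ (j + l) = w l := by
  obtain ⟨j, hj⟩ := hσ (N + n) (Fin.append (fun _ : Fin N => σ 0) w)
  refine ⟨j + N, Nat.le_add_left N j, fun l => ?_⟩
  have := hj (Fin.natAdd N l)
  rwa [Fin.append_right, Fin.val_natAdd, ← add_assoc] at this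

section IFS

variable {X : Type*} {Λ : Type*} (f : Λ → X → X)

theorem mem_hutch {B : Set X} {x : X} (a : Λ) (hx : x ∈ B) : f a x ∈ Hutch f B :=
  mem_iUnion.2 ⟨a, mem_image_of_mem _ hx⟩

theorem Set.Nonempty.hutch_iterate [Nonempty Λ] {B : Set X} (hB : B.Nonempty) (k : ℕ) :
    ((Hutch f)^[k] B).Nonempty := by
  induction k with
  | zero => exact hB
  | succ k ih =>
    rw [Function.iterate_succ_apply']
    obtain ⟨x, hx⟩ := ih
    exact ⟨_, mem_hutch f (Classical.arbitrary Λ) hx⟩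

theorem isCompact_hutch_iterate [TopologicalSpace X] [Finite Λ] (hf : ∀ a, Continuous (f a))
    {B : Set X} (hB : IsCompact B) (k : ℕ) : IsCompact ((Hutch f)^[k] B) := by
  induction k with
  | zero => exact hB
  | succ k ih =>
    rw [Function.iterate_succ_apply']
    exact isCompact_iUnion fun a => ih.image (hf a)

theorem orbit_mem_hutch_iterate (σ : ℕ → Λ) (x₀ : X) (k : ℕ) :
    orbit f σ x₀ k ∈ (Hutch f)^[k] {x₀} := by
  induction k with
  | zero => exact rfl
  | succ k ih =>
    rw [Function.iterate_succ_apply']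
    exact mem_hutch f (σ k) ih

theorem orbit_add_s7 (σ : ℕ → Λ) (x₀ : X) (j n : ℕ) :
    orbit f σ x₀ (j + n) = orbit f (fun i => σ (j + i)) (orbit f σ x₀ j) n := by
  induction n with
  | zero => rfl
  | succ n ih => exact congrArg (f (σ (j + n))) ih

theorem orbit_succ' (σ : ℕ → Λ) (x₀ : X) (n : ℕ) :
    orbit f σ x₀ (n + 1) = orbit f (fun i => σ (i + 1)) (f (σ 0) x₀) n := by
  induction n with
  | zero => rfl
  | succ n ih => exact congrArg (f (σ (n + 1))) ih

-- The orbit applies its first letter first, whereas `fibreComp` applies its first letter last.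
theorem orbit_eq_fibreComp {n : ℕ} {τ ρ : ℕ → Λ} (h : ∀ i < n, τ i = ρ (n - 1 - i)) (x : X) :
    orbit f τ x n = fibreComp f ρ n x := by
  induction n generalizing τ x with
  | zero => rfl
  | succ n ih =>
    have htail : ∀ i < n, τ (i + 1) = ρ (n - 1 - i) := fun i hi =>
      (h (i + 1) (by omega)).trans (congrArg ρ (by omega))
    rw [orbit_succ', ih htail, h 0 n.succ_pos]
    rfl

theorem continuous_fibreComp [TopologicalSpace X] (hf : ∀ a, Continuous (f a)) (ρ : ℕ → Λ)
    (n : ℕ) : Continuous (fibreComp f ρ n) := by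
  induction n with
  | zero => exact continuous_id
  | succ n ih => exact ih.comp (hf (ρ n))

theorem fibreComp_succ_image_subset {A : Set X} (hA : ∀ a, f a '' A ⊆ A) (ρ : ℕ → Λ) (n : ℕ) :
    fibreComp f ρ (n + 1) '' A ⊆ fibreComp f ρ n '' A := by
  rw [fibreComp, image_comp]
  exact image_mono (hA (ρ n))

variable [MetricSpace X] {f}

theorem tailSet_succ_subset (σ : ℕ → Λ) (x₀ : X) (N : ℕ) :
    tailSet f σ x₀ (N + 1) ⊆ tailSet f σ x₀ N :=
  closure_mono fun _ ⟨k, hk, hx⟩ => ⟨k, by omega, hx⟩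

theorem Attracts.image_subset [Finite Λ] (hf : ∀ a, Continuous (f a)) {A U : Set X}
    (hatt : Attracts f A U) (hA : IsCompact A) (hAU : A ⊆ U) (a : Λ) : f a '' A ⊆ A := by
  rintro _ ⟨x, hx, rfl⟩
  have : Nonempty Λ := ⟨a⟩
  have hconv := hatt A ⟨x, hx⟩ hA hAU
  have hcompact := isCompact_hutch_iterate f hf hA
  obtain ⟨y, hy, hyx⟩ := exists_seq_tendsto_of_tendsto_hausdorffDist hcompact
    (Set.Nonempty.hutch_iterate f ⟨x, hx⟩) hA.isBounded hconv hx
  have hnext : Tendsto (fun k => infDist (f a (y k)) A) atTop (nhds 0) := by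
    refine tendsto_infDist_of_tendsto_hausdorffDist (s := fun k => (Hutch f)^[k + 1] A)
      (t := fun _ => A) (fun k => ?_) (fun k => (hcompact (k + 1)).isBounded)
      (fun _ => ⟨x, hx⟩) (fun _ => hA.isBounded) (hconv.comp (tendsto_add_atTop_nat 1))
    rw [Function.iterate_succ_apply']
    exact mem_hutch f a (hy k)
  have hlim : Tendsto (fun k => infDist (f a (y k)) A) atTop (nhds (infDist (f a x) A)) :=
    ((continuous_infDist_pt A).comp (hf a)).continuousAt.tendsto.comp hyx
  exact (hA.isClosed.mem_iff_infDist_zero ⟨x, hx⟩).2 (tendsto_nhds_unique hlim hnext)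

theorem tendsto_infDist_orbit [Finite Λ] (hf : ∀ a, Continuous (f a)) {A U : Set X}
    (hatt : Attracts f A U) (hA : IsCompact A) (hAne : A.Nonempty) {x₀ : X} (hx₀ : x₀ ∈ U)
    (σ : ℕ → Λ) : Tendsto (fun k => infDist (orbit f σ x₀ k) A) atTop (nhds 0) :=
  tendsto_infDist_of_tendsto_hausdorffDist (t := fun _ => A) (orbit_mem_hutch_iterate f σ x₀)
    (fun k => (isCompact_hutch_iterate f hf isCompact_singleton k).isBounded) (fun _ => hAne)
    (fun _ => hA.isBounded)
    (hatt _ (singleton_nonempty x₀) isCompact_singleton (singleton_subset_iff.2 hx₀))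

theorem fibreComp_image_inter_tailSet_nonempty [Finite Λ] (hf : ∀ a, Continuous (f a))
    {A U : Set X} (hatt : Attracts f A U) (hA : IsCompact A) (hAne : A.Nonempty) {x₀ : X}
    (hx₀ : x₀ ∈ U) {σ : ℕ → Λ} (hσ : Disjunctive σ) (ρ : ℕ → Λ) (n N : ℕ) :
    (fibreComp f ρ n '' A ∩ tailSet f σ x₀ N).Nonempty := by
  choose j hjM hj using fun M => hσ.exists_ge M fun i : Fin n => ρ (n - 1 - i)
  have hnear : Tendsto (fun M => infDist (orbit f σ x₀ (j M)) A) atTop (nhds 0) :=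
    (tendsto_infDist_orbit hf hatt hA hAne hx₀ σ).comp (tendsto_atTop_mono hjM tendsto_id)
  obtain ⟨b, hb, φ, hφ, hlim⟩ := hA.exists_tendsto_subseq_of_tendsto_infDist hAne hnear
  refine ⟨fibreComp f ρ n b, mem_image_of_mem _ hb, mem_closure_of_tendsto
    (((continuous_fibreComp f hf ρ n).tendsto b).comp hlim) ?_⟩
  filter_upwards [eventually_ge_atTop N] with i hi
  refine ⟨j (φ i) + n, 
    hi.trans ((hφ.id_le i).trans ((hjM _).trans (Nat.le_add_right _ _))), ?_⟩
  rw [orbit_add_s7, orbit_eq_fibreComp f fun l hl => hj (φ i) ⟨l, hl⟩]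
  rfl

end IFS

/-- Theorem 1: for disjunctive `σ`, the set `C_∞(x₀,σ)` intersects
every fibre `A_ρ` of the attractor `A`. -/
theorem chaosGame_Cinf_meets_every_fibre
    (f : Λ → X → X) (hf : ∀ a : Λ, Continuous (f a))
    (A : Set X) (hA : IsAttractor f A)
    (x₀ : X) (hx₀ : x₀ ∈ basin f A)
    (σ : ℕ → Λ) (hσ : Disjunctive σ) (ρ : ℕ → Λ) :
    (fibre f A ρ ∩ Cinf f σ x₀).Nonempty := by
  obtain ⟨hAne, hAc, -⟩ := hA
  obtain ⟨U, ⟨-, hAU, hatt⟩, hx₀U⟩ := hx₀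
  set C : ℕ → Set X := fun K => fibreComp f ρ (K + 1) '' A ∩ tailSet f σ x₀ K
  have hC : ∀ K, IsCompact (C K) := fun K =>
    (hAc.image (continuous_fibreComp f hf ρ (K + 1))).inter_right isClosed_closure
  have hCanti : ∀ K, C (K + 1) ⊆ C K := fun K =>
    inter_subset_inter (fibreComp_succ_image_subset f (hatt.image_subset hf hAc hAU) ρ _)
      (tailSet_succ_subset σ x₀ K)
  obtain ⟨x, hx⟩ := IsCompact.nonempty_iInter_of_sequence_nonempty_isCompact_isClosed C hCanti
    (fun K => fibreComp_image_inter_tailSet_nonempty hf hatt hAc hAne hx₀U hσ ρ (K + 1) K)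
    (hC 0) fun K => (hC K).isClosed
  rw [mem_iInter] at hx
  exact ⟨x, mem_iInter.2 fun K => (hx K).1, mem_iInter.2 fun K => (hx K).2⟩
end
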